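/- arXiv:1306.2281 — 3 statements merged into one kernel-verified Lean document; each statement's English description precedes it below -/
import Mathlib

section
/- Let P be the probability measure on Bool × Bool × Bool given by P(0,0,0) = 0.2, P(0,0,1) = 0.1, P(0,1,0) = 0.1, P(0,1,1) = 0.1, P(1,0,0) = 0.1, P(1,0,1) = 0.1, P(1,1,0) = 0.1, P(1,1,1) = 0.2. Then the Lancaster interaction measure of P vanishes, i.e., P + 2·(P_X ⊗ P_Y ⊗ P_Z) = P_{XY} ⊗ P_Z + P_{XZ} ⊗ P_Y + P_{YZ} ⊗ P_X, yet none of the three factorizations holds: P ≠ (reassociated) P_{XY} ⊗ P_Z, P ≠ (reordered) P_{XZ} ⊗ P_Y, and P ≠ (reordered) P_{YZ} ⊗ P_X. Hence Δ_L P = 0 does not imply that the joint distribution factorizes. -/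
open MeasureTheory
open scoped ENNReal NNReal

variable {X Y Z : Type*} [MeasurableSpace X] [MeasurableSpace Y] [MeasurableSpace Z]

/-- The `(X,Y)`-marginal times the `Z`-marginal, reassociated to a measure on `X × Y × Z`. -/
noncomputable def prodXY_Z (P : Measure (X × Y × Z)) : Measure (X × Y × Z) :=
  ((P.map (fun p => (p.1, p.2.1))).prod (P.map (fun p => p.2.2))).map
    (fun q => (q.1.1, q.1.2, q.2))

/-- The `(X,Z)`-marginal times the `Y`-marginal, reordered to a measure on `X × Y × Z`. -/
noncomputable def prodXZ_Y (P : Measure (X × Y × Z)) : Measure (X × Y × Z) :=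
  ((P.map (fun p => (p.1, p.2.2))).prod (P.map (fun p => p.2.1))).map
    (fun q => (q.1.1, q.2, q.1.2))

/-- The `(Y,Z)`-marginal times the `X`-marginal, reordered to a measure on `X × Y × Z`. -/
noncomputable def prodYZ_X (P : Measure (X × Y × Z)) : Measure (X × Y × Z) :=
  ((P.map (fun p => p.2)).prod (P.map (fun p => p.1))).map
    (fun q => (q.2, q.1.1, q.1.2))

/-- The product of the three one-variable marginals, as a measure on `X × Y × Z`. -/
noncomputable def prodX_Y_Z (P : Measure (X × Y × Z)) : Measure (X × Y × Z) :=
  (P.map (fun p => p.1)).prod ((P.map (fun p => p.2.1)).prod (P.map (fun p => p.2.2)))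

lemma meas_pair' {α : Type*} [MeasurableSpace α] [MeasurableSingletonClass α]
    (P : Measure α) {a b : α} (h : a ≠ b) :
    P {a, b} = P {a} + P {b} := by
  rw [show ({a, b} : Set α) = {a} ∪ {b} from rfl,
    measure_union (by simpa using h) (measurableSet_singleton b)]

lemma meas_quad' {α : Type*} [MeasurableSpace α] [MeasurableSingletonClass α]
    (P : Measure α) {a b c d : α}
    (hab : a ≠ b) (hac : a ≠ c) (had : a ≠ d) (hbc : b ≠ c) (hbd : b ≠ d) (hcd : c ≠ d) :
    P {a, b, c, d} = P {a} + (P {b} + (P {c} + P {d})) := by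
  rw [show ({a, b, c, d} : Set α) = {a} ∪ {b, c, d} from rfl,
    measure_union (by simp [hab, hac, had])
      (((measurableSet_singleton d).insert c).insert b)]
  congr 1
  rw [show ({b, c, d} : Set α) = {b} ∪ {c, d} from rfl,
    measure_union (by simp [hbc, hbd]) ((measurableSet_singleton d).insert c),
    meas_pair' P hcd]

private lemma n5a : (2/10 + (1/10 + (1/10 + 1/10)) : ℝ≥0∞) = 5/10 := by
  have h : (2/10 + (1/10 + (1/10 + 1/10)) : ℝ≥0) = 5/10 := by field_simp; try ring
  have h2 := congrArg ((↑·) : ℝ≥0 → ℝ≥0∞) h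
  push_cast at h2
  simpa using h2
private lemma n5b : (1/10 + (1/10 + (1/10 + 2/10)) : ℝ≥0∞) = 5/10 := by
  have h : (1/10 + (1/10 + (1/10 + 2/10)) : ℝ≥0) = 5/10 := by field_simp; try ring
  have h2 := congrArg ((↑·) : ℝ≥0 → ℝ≥0∞) h
  push_cast at h2
  simpa using h2
private lemma n3a : (2/10 + 1/10 : ℝ≥0∞) = 3/10 := by
  have h : (2/10 + 1/10 : ℝ≥0) = 3/10 := by field_simp; try ring
  have h2 := congrArg ((↑·) : ℝ≥0 → ℝ≥0∞) h
  push_cast at h2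
  simpa using h2
private lemma n3b : (1/10 + 2/10 : ℝ≥0∞) = 3/10 := by
  have h : (1/10 + 2/10 : ℝ≥0) = 3/10 := by field_simp; try ring
  have h2 := congrArg ((↑·) : ℝ≥0 → ℝ≥0∞) h
  push_cast at h2
  simpa using h2
private lemma n2 : (1/10 + 1/10 : ℝ≥0∞) = 2/10 := by
  have h : (1/10 + 1/10 : ℝ≥0) = 2/10 := by field_simp; try ring
  have h2 := congrArg ((↑·) : ℝ≥0 → ℝ≥0∞) h
  push_cast at h2
  simpa using h2
private lemma nm2 : (2/10 + (5/10*(5/10*(5/10)) + 5/10*(5/10*(5/10))) : ℝ≥0∞) = 3/10*(5/10) + 3/10*(5/10) + 3/10*(5/10) := by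
  have h : (2/10 + (5/10*(5/10*(5/10)) + 5/10*(5/10*(5/10))) : ℝ≥0) = 3/10*(5/10) + 3/10*(5/10) + 3/10*(5/10) := by field_simp; try ring
  have h2 := congrArg ((↑·) : ℝ≥0 → ℝ≥0∞) h
  push_cast at h2
  simpa using h2
private lemma nm1a : (1/10 + (5/10*(5/10*(5/10)) + 5/10*(5/10*(5/10))) : ℝ≥0∞) = 3/10*(5/10) + 2/10*(5/10) + 2/10*(5/10) := by
  have h : (1/10 + (5/10*(5/10*(5/10)) + 5/10*(5/10*(5/10))) : ℝ≥0) = 3/10*(5/10) + 2/10*(5/10) + 2/10*(5/10) := by field_simp; try ring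
  have h2 := congrArg ((↑·) : ℝ≥0 → ℝ≥0∞) h
  push_cast at h2
  simpa using h2
private lemma nm1b : (1/10 + (5/10*(5/10*(5/10)) + 5/10*(5/10*(5/10))) : ℝ≥0∞) = 2/10*(5/10) + 3/10*(5/10) + 2/10*(5/10) := by
  have h : (1/10 + (5/10*(5/10*(5/10)) + 5/10*(5/10*(5/10))) : ℝ≥0) = 2/10*(5/10) + 3/10*(5/10) + 2/10*(5/10) := by field_simp; try ring
  have h2 := congrArg ((↑·) : ℝ≥0 → ℝ≥0∞) h
  push_cast at h2
  simpa using h2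
private lemma nm1c : (1/10 + (5/10*(5/10*(5/10)) + 5/10*(5/10*(5/10))) : ℝ≥0∞) = 2/10*(5/10) + 2/10*(5/10) + 3/10*(5/10) := by
  have h : (1/10 + (5/10*(5/10*(5/10)) + 5/10*(5/10*(5/10))) : ℝ≥0) = 2/10*(5/10) + 2/10*(5/10) + 3/10*(5/10) := by field_simp; try ring
  have h2 := congrArg ((↑·) : ℝ≥0 → ℝ≥0∞) h
  push_cast at h2
  simpa using h2
private lemma nne : (2 : ℝ≥0∞)/10 ≠ 3/10*(5/10) := by
  intro h
  have h2 := congrArg ENNReal.toReal h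
  simp [ENNReal.toReal_div, ENNReal.toReal_mul] at h2
  norm_num at h2

/-- The example of Table 4: the Lancaster interaction measure vanishes, but no
non-trivial factorization of the joint distribution holds. -/
theorem lancaster_zero_does_not_imply_factorization
    (P : Measure (Bool × Bool × Bool)) [IsProbabilityMeasure P]
    (h000 : P {(false, false, false)} = 2 / 10)
    (h001 : P {(false, false, true)} = 1 / 10)
    (h010 : P {(false, true, false)} = 1 / 10)
    (h011 : P {(false, true, true)} = 1 / 10)
    (h100 : P {(true, false, false)} = 1 / 10)
    (h101 : P {(true, false, true)} = 1 / 10)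
    (h110 : P {(true, true, false)} = 1 / 10)
    (h111 : P {(true, true, true)} = 2 / 10) :
    P + 2 • prodX_Y_Z P = prodXY_Z P + prodXZ_Y P + prodYZ_X P ∧
    P ≠ prodXY_Z P ∧ P ≠ prodXZ_Y P ∧ P ≠ prodYZ_X P := by
  haveI i1 : IsProbabilityMeasure (P.map (fun p : Bool × Bool × Bool => p.1)) :=
    Measure.isProbabilityMeasure_map (measurable_of_countable _).aemeasurable
  haveI i2 : IsProbabilityMeasure (P.map (fun p : Bool × Bool × Bool => p.2.1)) :=
    Measure.isProbabilityMeasure_map (measurable_of_countable _).aemeasurable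
  haveI i3 : IsProbabilityMeasure (P.map (fun p : Bool × Bool × Bool => p.2.2)) :=
    Measure.isProbabilityMeasure_map (measurable_of_countable _).aemeasurable
  haveI i4 : IsProbabilityMeasure (P.map (fun p : Bool × Bool × Bool => (p.1, p.2.1))) :=
    Measure.isProbabilityMeasure_map (measurable_of_countable _).aemeasurable
  haveI i5 : IsProbabilityMeasure (P.map (fun p : Bool × Bool × Bool => (p.1, p.2.2))) :=
    Measure.isProbabilityMeasure_map (measurable_of_countable _).aemeasurable
  haveI i6 : IsProbabilityMeasure (P.map (fun p : Bool × Bool × Bool => p.2)) :=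
    Measure.isProbabilityMeasure_map (measurable_of_countable _).aemeasurable











  have hXf : P.map (fun p : Bool × Bool × Bool => p.1) {false} = 5/10 := by
    rw [Measure.map_apply (measurable_of_countable _) (measurableSet_singleton _),
      show (fun p : Bool × Bool × Bool => p.1) ⁻¹' {false} =
        {(false, false, false), (false, false, true), (false, true, false), (false, true, true)} by ext ⟨a, b, c⟩; cases a <;> cases b <;> cases c <;> simp,
      meas_quad' P (by simp) (by simp) (by simp) (by simp) (by simp) (by simp),
      h000, h001, h010, h011]
    exact n5a

  have hXt : P.map (fun p : Bool × Bool × Bool => p.1) {true} = 5/10 := by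
    rw [Measure.map_apply (measurable_of_countable _) (measurableSet_singleton _),
      show (fun p : Bool × Bool × Bool => p.1) ⁻¹' {true} =
        {(true, false, false), (true, false, true), (true, true, false), (true, true, true)} by ext ⟨a, b, c⟩; cases a <;> cases b <;> cases c <;> simp,
      meas_quad' P (by simp) (by simp) (by simp) (by simp) (by simp) (by simp),
      h100, h101, h110, h111]
    exact n5b

  have hYf : P.map (fun p : Bool × Bool × Bool => p.2.1) {false} = 5/10 := by
    rw [Measure.map_apply (measurable_of_countable _) (measurableSet_singleton _),
      show (fun p : Bool × Bool × Bool => p.2.1) ⁻¹' {false} =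
        {(false, false, false), (false, false, true), (true, false, false), (true, false, true)} by ext ⟨a, b, c⟩; cases a <;> cases b <;> cases c <;> simp,
      meas_quad' P (by simp) (by simp) (by simp) (by simp) (by simp) (by simp),
      h000, h001, h100, h101]
    exact n5a

  have hYt : P.map (fun p : Bool × Bool × Bool => p.2.1) {true} = 5/10 := by
    rw [Measure.map_apply (measurable_of_countable _) (measurableSet_singleton _),
      show (fun p : Bool × Bool × Bool => p.2.1) ⁻¹' {true} =
        {(false, true, false), (false, true, true), (true, true, false), (true, true, true)} by ext ⟨a, b, c⟩; cases a <;> cases b <;> cases c <;> simp,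
      meas_quad' P (by simp) (by simp) (by simp) (by simp) (by simp) (by simp),
      h010, h011, h110, h111]
    exact n5b

  have hZf : P.map (fun p : Bool × Bool × Bool => p.2.2) {false} = 5/10 := by
    rw [Measure.map_apply (measurable_of_countable _) (measurableSet_singleton _),
      show (fun p : Bool × Bool × Bool => p.2.2) ⁻¹' {false} =
        {(false, false, false), (false, true, false), (true, false, false), (true, true, false)} by ext ⟨a, b, c⟩; cases a <;> cases b <;> cases c <;> simp,
      meas_quad' P (by simp) (by simp) (by simp) (by simp) (by simp) (by simp),
      h000, h010, h100, h110]
    exact n5a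

  have hZt : P.map (fun p : Bool × Bool × Bool => p.2.2) {true} = 5/10 := by
    rw [Measure.map_apply (measurable_of_countable _) (measurableSet_singleton _),
      show (fun p : Bool × Bool × Bool => p.2.2) ⁻¹' {true} =
        {(false, false, true), (false, true, true), (true, false, true), (true, true, true)} by ext ⟨a, b, c⟩; cases a <;> cases b <;> cases c <;> simp,
      meas_quad' P (by simp) (by simp) (by simp) (by simp) (by simp) (by simp),
      h001, h011, h101, h111]
    exact n5b

  have hXYff : P.map (fun p : Bool × Bool × Bool => (p.1, p.2.1)) {(false, false)} = 3/10 := by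
    rw [Measure.map_apply (measurable_of_countable _) (measurableSet_singleton _),
      show (fun p : Bool × Bool × Bool => (p.1, p.2.1)) ⁻¹' {(false, false)} =
        {(false, false, false), (false, false, true)} by ext ⟨a, b, c⟩; cases a <;> cases b <;> cases c <;> simp,
      meas_pair' P (by simp), h000, h001]
    exact n3a

  have hXYft : P.map (fun p : Bool × Bool × Bool => (p.1, p.2.1)) {(false, true)} = 2/10 := by
    rw [Measure.map_apply (measurable_of_countable _) (measurableSet_singleton _),
      show (fun p : Bool × Bool × Bool => (p.1, p.2.1)) ⁻¹' {(false, true)} =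
        {(false, true, false), (false, true, true)} by ext ⟨a, b, c⟩; cases a <;> cases b <;> cases c <;> simp,
      meas_pair' P (by simp), h010, h011]
    exact n2

  have hXYtf : P.map (fun p : Bool × Bool × Bool => (p.1, p.2.1)) {(true, false)} = 2/10 := by
    rw [Measure.map_apply (measurable_of_countable _) (measurableSet_singleton _),
      show (fun p : Bool × Bool × Bool => (p.1, p.2.1)) ⁻¹' {(true, false)} =
        {(true, false, false), (true, false, true)} by ext ⟨a, b, c⟩; cases a <;> cases b <;> cases c <;> simp,
      meas_pair' P (by simp), h100, h101]
    exact n2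

  have hXYtt : P.map (fun p : Bool × Bool × Bool => (p.1, p.2.1)) {(true, true)} = 3/10 := by
    rw [Measure.map_apply (measurable_of_countable _) (measurableSet_singleton _),
      show (fun p : Bool × Bool × Bool => (p.1, p.2.1)) ⁻¹' {(true, true)} =
        {(true, true, false), (true, true, true)} by ext ⟨a, b, c⟩; cases a <;> cases b <;> cases c <;> simp,
      meas_pair' P (by simp), h110, h111]
    exact n3b

  have hXZff : P.map (fun p : Bool × Bool × Bool => (p.1, p.2.2)) {(false, false)} = 3/10 := by
    rw [Measure.map_apply (measurable_of_countable _) (measurableSet_singleton _),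
      show (fun p : Bool × Bool × Bool => (p.1, p.2.2)) ⁻¹' {(false, false)} =
        {(false, false, false), (false, true, false)} by ext ⟨a, b, c⟩; cases a <;> cases b <;> cases c <;> simp,
      meas_pair' P (by simp), h000, h010]
    exact n3a

  have hXZft : P.map (fun p : Bool × Bool × Bool => (p.1, p.2.2)) {(false, true)} = 2/10 := by
    rw [Measure.map_apply (measurable_of_countable _) (measurableSet_singleton _),
      show (fun p : Bool × Bool × Bool => (p.1, p.2.2)) ⁻¹' {(false, true)} =
        {(false, false, true), (false, true, true)} by ext ⟨a, b, c⟩; cases a <;> cases b <;> cases c <;> simp,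
      meas_pair' P (by simp), h001, h011]
    exact n2

  have hXZtf : P.map (fun p : Bool × Bool × Bool => (p.1, p.2.2)) {(true, false)} = 2/10 := by
    rw [Measure.map_apply (measurable_of_countable _) (measurableSet_singleton _),
      show (fun p : Bool × Bool × Bool => (p.1, p.2.2)) ⁻¹' {(true, false)} =
        {(true, false, false), (true, true, false)} by ext ⟨a, b, c⟩; cases a <;> cases b <;> cases c <;> simp,
      meas_pair' P (by simp), h100, h110]
    exact n2

  have hXZtt : P.map (fun p : Bool × Bool × Bool => (p.1, p.2.2)) {(true, true)} = 3/10 := by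
    rw [Measure.map_apply (measurable_of_countable _) (measurableSet_singleton _),
      show (fun p : Bool × Bool × Bool => (p.1, p.2.2)) ⁻¹' {(true, true)} =
        {(true, false, true), (true, true, true)} by ext ⟨a, b, c⟩; cases a <;> cases b <;> cases c <;> simp,
      meas_pair' P (by simp), h101, h111]
    exact n3b

  have hYZff : P.map (fun p : Bool × Bool × Bool => p.2) {(false, false)} = 3/10 := by
    rw [Measure.map_apply (measurable_of_countable _) (measurableSet_singleton _),
      show (fun p : Bool × Bool × Bool => p.2) ⁻¹' {(false, false)} =
        {(false, false, false), (true, false, false)} by ext ⟨a, b, c⟩; cases a <;> cases b <;> cases c <;> simp,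
      meas_pair' P (by simp), h000, h100]
    exact n3a

  have hYZft : P.map (fun p : Bool × Bool × Bool => p.2) {(false, true)} = 2/10 := by
    rw [Measure.map_apply (measurable_of_countable _) (measurableSet_singleton _),
      show (fun p : Bool × Bool × Bool => p.2) ⁻¹' {(false, true)} =
        {(false, false, true), (true, false, true)} by ext ⟨a, b, c⟩; cases a <;> cases b <;> cases c <;> simp,
      meas_pair' P (by simp), h001, h101]
    exact n2

  have hYZtf : P.map (fun p : Bool × Bool × Bool => p.2) {(true, false)} = 2/10 := by
    rw [Measure.map_apply (measurable_of_countable _) (measurableSet_singleton _),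
      show (fun p : Bool × Bool × Bool => p.2) ⁻¹' {(true, false)} =
        {(false, true, false), (true, true, false)} by ext ⟨a, b, c⟩; cases a <;> cases b <;> cases c <;> simp,
      meas_pair' P (by simp), h010, h110]
    exact n2

  have hYZtt : P.map (fun p : Bool × Bool × Bool => p.2) {(true, true)} = 3/10 := by
    rw [Measure.map_apply (measurable_of_countable _) (measurableSet_singleton _),
      show (fun p : Bool × Bool × Bool => p.2) ⁻¹' {(true, true)} =
        {(false, true, true), (true, true, true)} by ext ⟨a, b, c⟩; cases a <;> cases b <;> cases c <;> simp,
      meas_pair' P (by simp), h011, h111]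
    exact n3b

  have keyXY : ∀ x y z : Bool, prodXY_Z P {(x, y, z)} =
      P.map (fun p : Bool × Bool × Bool => (p.1, p.2.1)) {(x, y)} *
      P.map (fun p : Bool × Bool × Bool => p.2.2) {z} := by
    intro x y z
    unfold prodXY_Z
    rw [Measure.map_apply (measurable_of_countable _) (measurableSet_singleton _),
      show (fun q : (Bool × Bool) × Bool => (q.1.1, q.1.2, q.2)) ⁻¹' {(x, y, z)} =
        {(x, y)} ×ˢ {z} by ext ⟨⟨a, b⟩, c⟩; simp [Prod.ext_iff, and_assoc],
      Measure.prod_prod]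
  have keyXZ : ∀ x y z : Bool, prodXZ_Y P {(x, y, z)} =
      P.map (fun p : Bool × Bool × Bool => (p.1, p.2.2)) {(x, z)} *
      P.map (fun p : Bool × Bool × Bool => p.2.1) {y} := by
    intro x y z
    unfold prodXZ_Y
    rw [Measure.map_apply (measurable_of_countable _) (measurableSet_singleton _),
      show (fun q : (Bool × Bool) × Bool => (q.1.1, q.2, q.1.2)) ⁻¹' {(x, y, z)} =
        {(x, z)} ×ˢ {y} by
          ext ⟨⟨a, c⟩, b⟩
          simp only [Set.mem_preimage, Set.mem_singleton_iff, Set.mem_prod, Prod.ext_iff]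
          tauto,
      Measure.prod_prod]
  have keyYZ : ∀ x y z : Bool, prodYZ_X P {(x, y, z)} =
      P.map (fun p : Bool × Bool × Bool => p.2) {(y, z)} *
      P.map (fun p : Bool × Bool × Bool => p.1) {x} := by
    intro x y z
    unfold prodYZ_X
    rw [Measure.map_apply (measurable_of_countable _) (measurableSet_singleton _),
      show (fun q : (Bool × Bool) × Bool => (q.2, q.1.1, q.1.2)) ⁻¹' {(x, y, z)} =
        {(y, z)} ×ˢ {x} by
          ext ⟨⟨b, c⟩, a⟩
          simp only [Set.mem_preimage, Set.mem_singleton_iff, Set.mem_prod, Prod.ext_iff]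
          tauto,
      Measure.prod_prod]
  have keyXYZ : ∀ x y z : Bool, prodX_Y_Z P {(x, y, z)} =
      P.map (fun p : Bool × Bool × Bool => p.1) {x} *
      (P.map (fun p : Bool × Bool × Bool => p.2.1) {y} *
       P.map (fun p : Bool × Bool × Bool => p.2.2) {z}) := by
    intro x y z
    unfold prodX_Y_Z
    rw [
      show ({(x, y, z)} : Set (Bool × Bool × Bool)) = {x} ×ˢ ({y} ×ˢ {z}) by
        rw [Set.singleton_prod_singleton, Set.singleton_prod_singleton],
      Measure.prod_prod, Measure.prod_prod]
  refine ⟨?_, ?_, ?_, ?_⟩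
  · apply Measure.ext_of_singleton
    rintro ⟨x, y, z⟩
    rw [two_smul]
    simp only [Measure.add_apply]
    rw [keyXY x y z, keyXZ x y z, keyYZ x y z, keyXYZ x y z]

    cases x <;> cases y <;> cases z
    · rw [h000, hXYff, hZf, hXZff, hYf, hYZff, hXf]
      exact nm2
    · rw [h001, hXYff, hZt, hXZft, hYf, hYZft, hXf]
      exact nm1a
    · rw [h010, hXYft, hZf, hXZff, hYt, hYZtf, hXf]
      exact nm1b
    · rw [h011, hXYft, hZt, hXZft, hYt, hYZtt, hXf]
      exact nm1c
    · rw [h100, hXYtf, hZf, hXZtf, hYf, hYZff, hXt]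
      exact nm1c
    · rw [h101, hXYtf, hZt, hXZtt, hYf, hYZft, hXt]
      exact nm1b
    · rw [h110, hXYtt, hZf, hXZtf, hYt, hYZtf, hXt]
      exact nm1a
    · rw [h111, hXYtt, hZt, hXZtt, hYt, hYZtt, hXt]
      exact nm2

  · intro h
    refine nne ?_
    calc (2 : ℝ≥0∞)/10 = P {(false, false, false)} := h000.symm
      _ = prodXY_Z P {(false, false, false)} := congrArg (fun μ : Measure (Bool × Bool × Bool) => μ {(false, false, false)}) h
      _ = 3/10*(5/10) := by rw [keyXY false false false, hXYff, hZf]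
  · intro h
    refine nne ?_
    calc (2 : ℝ≥0∞)/10 = P {(false, false, false)} := h000.symm
      _ = prodXZ_Y P {(false, false, false)} := congrArg (fun μ : Measure (Bool × Bool × Bool) => μ {(false, false, false)}) h
      _ = 3/10*(5/10) := by rw [keyXZ false false false, hXZff, hYf]
  · intro h
    refine nne ?_
    calc (2 : ℝ≥0∞)/10 = P {(false, false, false)} := h000.symm
      _ = prodYZ_X P {(false, false, false)} := congrArg (fun μ : Measure (Bool × Bool × Bool) => μ {(false, false, false)}) h
      _ = 3/10*(5/10) := by rw [keyYZ false false false, hYZff, hXf]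
end

section
/- Let K, L, M be symmetric n×n real matrices, H = I − (1/n)𝟙𝟙ᵀ, K̃ = HKH, L̃ = HLH. Then (K̃ ∘ L̃ ∘ M)_{++} = (K ∘ L ∘ M)_{++} − (2/n)[((K ∘ M)L)_{++} + ((L ∘ M)K)_{++}] + (1/n²)[K_{++}(L ∘ M)_{++} + L_{++}(K ∘ M)_{++}] + (2/n²)[∑_{a=1}^{n} K_{a+} L_{a+} M_{a+} + (LMK)_{++}] − (2/n³)[K_{++}(LM)_{++} + L_{++}(KM)_{++}] + (1/n⁴) K_{++} L_{++} M_{++}. (This is the V-statistic for the incomplete Lancaster interaction measure Δ_{(Z)}P̂ = P̂_{XYZ} + P̂_X P̂_Y P̂_Z − P̂_{YZ} P̂_X − P̂_{XZ} P̂_Y, multiplied by n².) -/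
open Matrix Finset
open scoped Matrix

/-- Sum of all entries of a square matrix. -/
noncomputable def sumAll {n : ℕ} (A : Matrix (Fin n) (Fin n) ℝ) : ℝ := ∑ i, ∑ j, A i j

/-- Sum of the a-th row of a square matrix. -/
noncomputable def rowSum {n : ℕ} (A : Matrix (Fin n) (Fin n) ℝ) (a : Fin n) : ℝ := ∑ j, A a j

/-- The all-ones matrix 𝟙𝟙ᵀ. -/
def onesMat (n : ℕ) : Matrix (Fin n) (Fin n) ℝ := Matrix.of fun _ _ => 1

/-- The centering matrix H = I - (1/n)𝟙𝟙ᵀ. -/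
noncomputable def centMat (n : ℕ) : Matrix (Fin n) (Fin n) ℝ :=
  1 - (1 / (n : ℝ)) • onesMat n

lemma cent_apply {n : ℕ} (K : Matrix (Fin n) (Fin n) ℝ) (i j : Fin n) :
    (centMat n * K * centMat n) i j =
      K i j - (1/(n:ℝ)) * (∑ k, K k j) - (1/(n:ℝ)) * (∑ k, K i k)
        + (1/(n:ℝ))^2 * ∑ k, ∑ l, K k l := by
  have h1 : centMat n * K = K - (1/(n:ℝ)) • (onesMat n * K) := by
    simp [centMat, Matrix.sub_mul, Matrix.smul_mul]
  rw [h1, Matrix.sub_mul, Matrix.smul_mul, centMat, Matrix.mul_sub, Matrix.mul_sub,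
    Matrix.mul_one, Matrix.mul_one]
  simp [Matrix.sub_apply, Matrix.smul_apply, Matrix.mul_apply, onesMat,
    Finset.mul_sum, Finset.sum_mul]
  simp only [← Finset.mul_sum, ← Finset.sum_mul]
  rw [Finset.sum_comm (f := fun i x => K i x)]
  ring

lemma sum_swap' {n : ℕ} (f : Fin n → Fin n → ℝ) :
    ∑ i, ∑ j, f i j = ∑ i, ∑ j, f j i := Finset.sum_comm

lemma sumAll_mul {n : ℕ} (A B : Matrix (Fin n) (Fin n) ℝ) :
    sumAll (A * B) = ∑ i, ∑ k, A i k * rowSum B k := by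
  simp only [sumAll, Matrix.mul_apply]
  refine Finset.sum_congr rfl fun i _ => ?_
  rw [Finset.sum_comm]
  exact Finset.sum_congr rfl fun k _ => by
    rw [show rowSum B k = ∑ j, B k j from rfl, Finset.mul_sum]

theorem incomplete_lancaster_V_statistic {n : ℕ} (hn : 0 < n)
    (K L M : Matrix (Fin n) (Fin n) ℝ)
    (hK : K.IsSymm) (hL : L.IsSymm) (hM : M.IsSymm) :
    sumAll ((centMat n * K * centMat n) ⊙ (centMat n * L * centMat n) ⊙ M) =
      sumAll (K ⊙ L ⊙ M)
        - (2 / (n : ℝ)) * (sumAll ((K ⊙ M) * L) + sumAll ((L ⊙ M) * K))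
        + (1 / (n : ℝ) ^ 2) * (sumAll K * sumAll (L ⊙ M) + sumAll L * sumAll (K ⊙ M))
        + (2 / (n : ℝ) ^ 2) * ((∑ a, rowSum K a * rowSum L a * rowSum M a) + sumAll (L * M * K))
        - (2 / (n : ℝ) ^ 3) * (sumAll K * sumAll (L * M) + sumAll L * sumAll (K * M))
        + (1 / (n : ℝ) ^ 4) * (sumAll K * sumAll L * sumAll M) := by
  have hcK : ∀ j : Fin n, (∑ k, K k j) = rowSum K j := fun j => by
    unfold rowSum; exact Finset.sum_congr rfl fun k _ => hK.apply j k
  have hcL : ∀ j : Fin n, (∑ k, L k j) = rowSum L j := fun j => by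
    unfold rowSum; exact Finset.sum_congr rfl fun k _ => hL.apply j k
  set c : ℝ := 1/(n:ℝ) with hc
  -- Step 1: entrywise expansion of the LHS
  have e1 : sumAll ((centMat n * K * centMat n) ⊙ (centMat n * L * centMat n) ⊙ M) =
      ∑ i, ∑ j, (K i j - c * rowSum K i - c * rowSum K j + c^2 * sumAll K) *
        ((L i j - c * rowSum L i - c * rowSum L j + c^2 * sumAll L) * M i j) := by
    refine Finset.sum_congr rfl fun i _ => Finset.sum_congr rfl fun j _ => ?_
    rw [Matrix.hadamard_apply, Matrix.hadamard_apply, cent_apply, cent_apply, hcK j, hcL j]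
    simp only [rowSum, sumAll]
    ring
  -- Step 2: expand the product into 16 double sums
  have e2 : (∑ i, ∑ j, (K i j - c * rowSum K i - c * rowSum K j + c^2 * sumAll K) *
        ((L i j - c * rowSum L i - c * rowSum L j + c^2 * sumAll L) * M i j)) =
      (∑ i, ∑ j, K i j * L i j * M i j)
      - c * (∑ i, ∑ j, rowSum L i * (K i j * M i j))
      - c * (∑ i, ∑ j, rowSum L j * (K i j * M i j))
      - c * (∑ i, ∑ j, rowSum K i * (L i j * M i j))
      - c * (∑ i, ∑ j, rowSum K j * (L i j * M i j))
      + c^2 * sumAll L * (∑ i, ∑ j, K i j * M i j)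
      + c^2 * sumAll K * (∑ i, ∑ j, L i j * M i j)
      + c^2 * (∑ i, ∑ j, rowSum K i * (rowSum L i * M i j))
      + c^2 * (∑ i, ∑ j, rowSum K j * (rowSum L j * M i j))
      + c^2 * (∑ i, ∑ j, rowSum K i * (rowSum L j * M i j))
      + c^2 * (∑ i, ∑ j, rowSum K j * (rowSum L i * M i j))
      - c^3 * sumAll L * (∑ i, ∑ j, rowSum K i * M i j)
      - c^3 * sumAll L * (∑ i, ∑ j, rowSum K j * M i j)
      - c^3 * sumAll K * (∑ i, ∑ j, rowSum L i * M i j)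
      - c^3 * sumAll K * (∑ i, ∑ j, rowSum L j * M i j)
      + c^4 * sumAll K * sumAll L * (∑ i, ∑ j, M i j) := by
    simp only [Finset.mul_sum, ← Finset.sum_add_distrib, ← Finset.sum_sub_distrib]
    exact Finset.sum_congr rfl fun i _ => Finset.sum_congr rfl fun j _ => by ring
  -- identifications of RHS quantities with canonical double sums
  have iA : sumAll (K ⊙ L ⊙ M) = ∑ i, ∑ j, K i j * L i j * M i j := by
    simp only [sumAll, Matrix.hadamard_apply]
  have ib : sumAll ((K ⊙ M) * L) = ∑ i, ∑ j, rowSum L j * (K i j * M i j) := by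
    rw [sumAll_mul]
    exact Finset.sum_congr rfl fun i _ => Finset.sum_congr rfl fun j _ => by
      rw [Matrix.hadamard_apply]; ring
  have id' : sumAll ((L ⊙ M) * K) = ∑ i, ∑ j, rowSum K j * (L i j * M i j) := by
    rw [sumAll_mul]
    exact Finset.sum_congr rfl fun i _ => Finset.sum_congr rfl fun j _ => by
      rw [Matrix.hadamard_apply]; ring
  have iq : sumAll (L ⊙ M) = ∑ i, ∑ j, L i j * M i j := by
    simp only [sumAll, Matrix.hadamard_apply]
  have ip : sumAll (K ⊙ M) = ∑ i, ∑ j, K i j * M i j := by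
    simp only [sumAll, Matrix.hadamard_apply]
  have ig : (∑ a, rowSum K a * rowSum L a * rowSum M a)
      = ∑ i, ∑ j, rowSum K i * (rowSum L i * M i j) := by
    refine Finset.sum_congr rfl fun a _ => ?_
    rw [show rowSum M a = ∑ j, M a j from rfl, Finset.mul_sum]
    exact Finset.sum_congr rfl fun j _ => by ring
  have ih : sumAll (L * M * K) = ∑ i, ∑ j, rowSum K j * (rowSum L i * M i j) := by
    rw [sumAll_mul]
    calc ∑ i, ∑ k, (L * M) i k * rowSum K k
        = ∑ i, ∑ k, (∑ l, L i l * M l k) * rowSum K k := by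
          simp only [Matrix.mul_apply]
      _ = ∑ k, ∑ i, (∑ l, L i l * M l k) * rowSum K k := Finset.sum_comm
      _ = ∑ k, ∑ l, ∑ i, (L i l * M l k) * rowSum K k := by
          refine Finset.sum_congr rfl fun k _ => ?_
          rw [← Finset.sum_comm]
          exact Finset.sum_congr rfl fun i _ => by rw [Finset.sum_mul]
      _ = ∑ k, ∑ l, rowSum K k * (rowSum L l * M l k) := by
          refine Finset.sum_congr rfl fun k _ => Finset.sum_congr rfl fun l _ => ?_
          have : ∑ i, L i l * M l k * rowSum K k = (∑ i, L i l) * (M l k * rowSum K k) := by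
            rw [Finset.sum_mul]
            exact Finset.sum_congr rfl fun i _ => by ring
          rw [this, hcL l]; ring
      _ = ∑ l, ∑ k, rowSum K k * (rowSum L l * M l k) := Finset.sum_comm
  have iu : sumAll (K * M) = ∑ i, ∑ j, rowSum K i * M i j := by
    rw [sumAll_mul]
    calc ∑ i, ∑ k, K i k * rowSum M k
        = ∑ k, ∑ i, K i k * rowSum M k := Finset.sum_comm
      _ = ∑ k, rowSum K k * rowSum M k := by
          refine Finset.sum_congr rfl fun k _ => ?_
          rw [← Finset.sum_mul, hcK k]
      _ = ∑ i, ∑ j, rowSum K i * M i j := by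
          refine Finset.sum_congr rfl fun i _ => ?_
          rw [show rowSum M i = ∑ j, M i j from rfl, Finset.mul_sum]
  have iv : sumAll (L * M) = ∑ i, ∑ j, rowSum L i * M i j := by
    rw [sumAll_mul]
    calc ∑ i, ∑ k, L i k * rowSum M k
        = ∑ k, ∑ i, L i k * rowSum M k := Finset.sum_comm
      _ = ∑ k, rowSum L k * rowSum M k := by
          refine Finset.sum_congr rfl fun k _ => ?_
          rw [← Finset.sum_mul, hcL k]
      _ = ∑ i, ∑ j, rowSum L i * M i j := by
          refine Finset.sum_congr rfl fun i _ => ?_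
          rw [show rowSum M i = ∑ j, M i j from rfl, Finset.mul_sum]
  -- symmetry swaps
  have hs23 : (∑ i, ∑ j, rowSum L i * (K i j * M i j))
      = ∑ i, ∑ j, rowSum L j * (K i j * M i j) := by
    rw [sum_swap' (fun i j => rowSum L i * (K i j * M i j))]
    exact Finset.sum_congr rfl fun i _ => Finset.sum_congr rfl fun j _ => by
      rw [hK.apply i j, hM.apply i j]
  have hs45 : (∑ i, ∑ j, rowSum K i * (L i j * M i j))
      = ∑ i, ∑ j, rowSum K j * (L i j * M i j) := by
    rw [sum_swap' (fun i j => rowSum K i * (L i j * M i j))]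
    exact Finset.sum_congr rfl fun i _ => Finset.sum_congr rfl fun j _ => by
      rw [hL.apply i j, hM.apply i j]
  have hs98 : (∑ i, ∑ j, rowSum K j * (rowSum L j * M i j))
      = ∑ i, ∑ j, rowSum K i * (rowSum L i * M i j) := by
    rw [sum_swap' (fun i j => rowSum K j * (rowSum L j * M i j))]
    exact Finset.sum_congr rfl fun i _ => Finset.sum_congr rfl fun j _ => by
      rw [hM.apply i j]
  have hs1011 : (∑ i, ∑ j, rowSum K i * (rowSum L j * M i j))
      = ∑ i, ∑ j, rowSum K j * (rowSum L i * M i j) := by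
    rw [sum_swap' (fun i j => rowSum K i * (rowSum L j * M i j))]
    exact Finset.sum_congr rfl fun i _ => Finset.sum_congr rfl fun j _ => by
      rw [hM.apply i j]
  have hs1312 : (∑ i, ∑ j, rowSum K j * M i j) = ∑ i, ∑ j, rowSum K i * M i j := by
    rw [sum_swap' (fun i j => rowSum K j * M i j)]
    exact Finset.sum_congr rfl fun i _ => Finset.sum_congr rfl fun j _ => by
      rw [hM.apply i j]
  have hs1514 : (∑ i, ∑ j, rowSum L j * M i j) = ∑ i, ∑ j, rowSum L i * M i j := by
    rw [sum_swap' (fun i j => rowSum L j * M i j)]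
    exact Finset.sum_congr rfl fun i _ => Finset.sum_congr rfl fun j _ => by
      rw [hM.apply i j]
  have iM : (∑ i, ∑ j, M i j) = sumAll M := rfl
  rw [e1, e2, hs23, hs45, hs98, hs1011, hs1312, hs1514, iM,
    iA, ib, id', iq, ip, ig, ih, iu, iv, hc]
  ring
end

section
/- Let K, K', L, L', M, M' be symmetric n×n real matrices such that K_{aa} + K_{bb} − 2K_{ab} = K'_{aa} + K'_{bb} − 2K'_{ab} for all a, b (i.e., K and K' induce the same semimetric, so the kernels are equivalent), and similarly for the pairs (L, L') and (M, M'). Let H = I − (1/n)𝟙𝟙ᵀ. Then HKH = HK'H, HLH = HL'H, HMH = HM'H, and consequently the Lancaster V-statistic is invariant: (HKH ∘ HLH ∘ HMH)_{++} = (HK'H ∘ HL'H ∘ HM'H)_{++}. -/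
open Matrix Finset
open scoped Matrix

lemma cent_entry {n : ℕ} (A : Matrix (Fin n) (Fin n) ℝ) (a b : Fin n) :
    (centMat n * A * centMat n) a b =
      A a b - (1/(n:ℝ)) * ∑ k, A k b - (1/(n:ℝ)) * ∑ j, A a j
        + (1/(n:ℝ))^2 * ∑ j, ∑ k, A k j := by
  simp only [centMat, onesMat, Matrix.mul_apply, Matrix.sub_apply, Matrix.smul_apply,
    Matrix.one_apply, Matrix.of_apply, smul_eq_mul, mul_one]
  simp only [sub_mul, mul_sub, ite_mul, one_mul, zero_mul, mul_ite, mul_one, mul_zero,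
    Finset.sum_sub_distrib, Finset.sum_ite_eq, Finset.sum_ite_eq', Finset.mem_univ, if_true,
    Finset.mul_sum, Finset.sum_mul]
  ring_nf

lemma cent_zero {n : ℕ} (hn : 0 < n) (D : Matrix (Fin n) (Fin n) ℝ)
    (hD : ∀ a b, D a b = (D a a + D b b) / 2) :
    centMat n * D * centMat n = 0 := by
  have hn' : (n : ℝ) ≠ 0 := Nat.cast_ne_zero.mpr hn.ne'
  have hcol : ∀ b, ∑ k, D k b = ((∑ k, D k k) + n * D b b) / 2 := by
    intro b
    rw [Finset.sum_congr rfl fun k _ => hD k b]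
    rw [← Finset.sum_div, Finset.sum_add_distrib, Finset.sum_const, Finset.card_univ,
      Fintype.card_fin, nsmul_eq_mul]
  have hrow : ∀ a, ∑ j, D a j = ((n : ℝ) * D a a + ∑ k, D k k) / 2 := by
    intro a
    rw [Finset.sum_congr rfl fun j _ => hD a j]
    rw [← Finset.sum_div, Finset.sum_add_distrib, Finset.sum_const, Finset.card_univ,
      Fintype.card_fin, nsmul_eq_mul]
  have hall : ∑ j, ∑ k, D k j = (n : ℝ) * ∑ k, D k k := by
    rw [Finset.sum_congr rfl fun j _ => hcol j]
    rw [← Finset.sum_div, Finset.sum_add_distrib, Finset.sum_const, Finset.card_univ,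
      Fintype.card_fin, nsmul_eq_mul, ← Finset.mul_sum]
    ring
  ext a b
  rw [cent_entry, hcol, hrow, hall, hD a b, Matrix.zero_apply]
  field_simp
  ring

lemma cent_eq {n : ℕ} (hn : 0 < n) (A A' : Matrix (Fin n) (Fin n) ℝ)
    (h : ∀ a b, A a a + A b b - 2 * A a b = A' a a + A' b b - 2 * A' a b) :
    centMat n * A * centMat n = centMat n * A' * centMat n := by
  have h0 : centMat n * (A - A') * centMat n = 0 := by
    apply cent_zero hn
    intro a b
    have := h a b
    simp only [Matrix.sub_apply]
    linarith
  rw [Matrix.mul_sub, Matrix.sub_mul, sub_eq_zero] at h0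
  exact h0

theorem lancaster_statistic_kernel_equivalence_invariance {n : ℕ} (hn : 0 < n)
    (K K' L L' M M' : Matrix (Fin n) (Fin n) ℝ)
    (hK : K.IsSymm) (hK' : K'.IsSymm) (hL : L.IsSymm) (hL' : L'.IsSymm)
    (hM : M.IsSymm) (hM' : M'.IsSymm)
    (hKK' : ∀ a b, K a a + K b b - 2 * K a b = K' a a + K' b b - 2 * K' a b)
    (hLL' : ∀ a b, L a a + L b b - 2 * L a b = L' a a + L' b b - 2 * L' a b)
    (hMM' : ∀ a b, M a a + M b b - 2 * M a b = M' a a + M' b b - 2 * M' a b) :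
    centMat n * K * centMat n = centMat n * K' * centMat n ∧
    centMat n * L * centMat n = centMat n * L' * centMat n ∧
    centMat n * M * centMat n = centMat n * M' * centMat n ∧
    sumAll ((centMat n * K * centMat n) ⊙ (centMat n * L * centMat n) ⊙
        (centMat n * M * centMat n)) =
      sumAll ((centMat n * K' * centMat n) ⊙ (centMat n * L' * centMat n) ⊙
        (centMat n * M' * centMat n)) := by
  have h1 := cent_eq hn K K' hKK'
  have h2 := cent_eq hn L L' hLL'
  have h3 := cent_eq hn M M' hMM'
  exact ⟨h1, h2, h3, by rw [h1, h2, h3]⟩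
end
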